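/- arXiv:2112.14268 — 4 statements merged into one kernel-verified Lean document; each statement's English description precedes it below -/
import Mathlib

section
/- For a strictly convex finitely generated rational polyhedral cone C in N_Q, a primitive ray generator ρ of C, and a Demazure root μ of C with respect to ρ (i.e. ⟨ρ, μ⟩ = -1 and ⟨ρ', μ⟩ ≥ 0 for all other primitive ray generators ρ' of C), the linear map ∂_μ on the monoid algebra A(C) = ⊕_{λ ∈ Γ(C)} K·f_λ defined by ∂_μ(f_λ) = ⟨ρ, λ⟩ f_{λ+μ} is a well-defined derivation of A(C). -/
def dotZ {d : ℕ} (v w : Fin d → ℤ) : ℤ := ∑ i, v i * w i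

def dotQ {d : ℕ} (x : Fin d → ℚ) (w : Fin d → ℤ) : ℚ := ∑ i, x i * (w i : ℚ)

def toQ {d : ℕ} (v : Fin d → ℤ) : Fin d → ℚ := fun i => (v i : ℚ)

/-- `C` is the convex cone generated by the finite set `S` of lattice points. -/
def IsConeOf {d : ℕ} (C : Set (Fin d → ℚ)) (S : Finset (Fin d → ℤ)) : Prop :=
  C = {x | ∃ c : (Fin d → ℤ) → ℚ, (∀ v, 0 ≤ c v) ∧ x = ∑ v ∈ S, c v • toQ v}

/-- A cone is strictly convex if it contains no line. -/
def StrictConvexCone {d : ℕ} (C : Set (Fin d → ℚ)) : Prop :=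
  ∀ x ∈ C, -x ∈ C → x = 0

def OnRay {d : ℕ} (ρ : Fin d → ℤ) (x : Fin d → ℚ) : Prop :=
  ∃ q : ℚ, 0 ≤ q ∧ x = q • toQ ρ

/-- `ρ` is a primitive lattice generator of an extremal ray (a one-dimensional face) of `C`. -/
def IsPrimRayGen {d : ℕ} (C : Set (Fin d → ℚ)) (ρ : Fin d → ℤ) : Prop :=
  (∀ (k : ℤ) (w : Fin d → ℤ), ρ = k • w → IsUnit k) ∧ toQ ρ ∈ C ∧
    ∀ x ∈ C, ∀ y ∈ C, OnRay ρ (x + y) → OnRay ρ x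

/-- `μ` is a Demazure root of `C` with respect to the primitive ray generator `ρ`. -/
def IsDemazureRoot {d : ℕ} (C : Set (Fin d → ℚ)) (ρ μ : Fin d → ℤ) : Prop :=
  IsPrimRayGen C ρ ∧ dotZ ρ μ = -1 ∧
    ∀ ρ' : Fin d → ℤ, IsPrimRayGen C ρ' → ρ' ≠ ρ → 0 ≤ dotZ ρ' μ

/-- The dual monoid `Γ(C) = {λ ∈ M ∣ ⟨x, λ⟩ ≥ 0 for all x ∈ C}`. -/
def GammaC {d : ℕ} (C : Set (Fin d → ℚ)) : AddSubmonoid (Fin d → ℤ) where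
  carrier := {lam | ∀ x ∈ C, 0 ≤ dotQ x lam}
  zero_mem' := by intro x hx; simp [dotQ]
  add_mem' := by
    intro a b ha hb x hx
    have h1 := ha x hx
    have h2 := hb x hx
    have h : dotQ x (a + b) = dotQ x a + dotQ x b := by
      unfold dotQ
      rw [← Finset.sum_add_distrib]
      refine Finset.sum_congr rfl fun i _ => ?_
      push_cast [Pi.add_apply]
      ring
    rw [h]
    linarith

-- auxiliary development
def coneOf {d : ℕ} (S : Finset (Fin d → ℤ)) : Set (Fin d → ℚ) :=
  {x | ∃ c : (Fin d → ℤ) → ℚ, (∀ v, 0 ≤ c v) ∧ x = ∑ v ∈ S, c v • toQ v}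

lemma zero_mem_coneOf {d : ℕ} (S : Finset (Fin d → ℤ)) : (0 : Fin d → ℚ) ∈ coneOf S := by
  exact ⟨0, fun v => le_refl 0, by simp⟩

lemma mem_coneOf_self {d : ℕ} {S : Finset (Fin d → ℤ)} {v : Fin d → ℤ} (hv : v ∈ S) :
    toQ v ∈ coneOf S := by
  classical
  refine ⟨fun w => if w = v then 1 else 0, fun w => by positivity, ?_⟩
  simp only [ite_smul, one_smul, zero_smul]
  rw [Finset.sum_ite_eq' S v toQ, if_pos hv]

lemma add_mem_coneOf {d : ℕ} {S : Finset (Fin d → ℤ)} {x y : Fin d → ℚ}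
    (hx : x ∈ coneOf S) (hy : y ∈ coneOf S) : x + y ∈ coneOf S := by
  obtain ⟨a, ha, rfl⟩ := hx
  obtain ⟨b, hb, rfl⟩ := hy
  refine ⟨a + b, fun v => by have := ha v; have := hb v; simpa using by linarith, ?_⟩
  rw [← Finset.sum_add_distrib]
  refine Finset.sum_congr rfl fun v _ => ?_
  simp [add_smul]

lemma smul_mem_coneOf {d : ℕ} {S : Finset (Fin d → ℤ)} {x : Fin d → ℚ} {q : ℚ}
    (hq : 0 ≤ q) (hx : x ∈ coneOf S) : q • x ∈ coneOf S := by
  obtain ⟨a, ha, rfl⟩ := hx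
  refine ⟨fun v => q * a v, fun v => mul_nonneg hq (ha v), ?_⟩
  rw [Finset.smul_sum]
  refine Finset.sum_congr rfl fun v _ => ?_
  rw [smul_smul]

lemma sum_mem_coneOf {d : ℕ} {S : Finset (Fin d → ℤ)} {ι : Type*} {T : Finset ι}
    {f : ι → Fin d → ℚ} (h : ∀ i ∈ T, f i ∈ coneOf S) : ∑ i ∈ T, f i ∈ coneOf S := by
  classical
  induction T using Finset.induction_on with
  | empty => simpa using zero_mem_coneOf S
  | insert a T' hni ih =>
    rw [Finset.sum_insert hni]
    exact add_mem_coneOf (h a (Finset.mem_insert_self a T'))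
      (ih fun i hi => h i (Finset.mem_insert_of_mem hi))

lemma coneOf_erase_sub {d : ℕ} {S : Finset (Fin d → ℤ)} {v : Fin d → ℤ} :
    coneOf (S.erase v) ⊆ coneOf S := by
  intro x hx
  obtain ⟨c, hc, rfl⟩ := hx
  refine ⟨fun w => if w ∈ S.erase v then c w else 0, fun w => ?_, ?_⟩
  · by_cases hw : w ∈ S.erase v <;> simp [hw, hc w]
  have h1 : ∑ w ∈ S.erase v, c w • toQ w
      = ∑ w ∈ S.erase v, (if w ∈ S.erase v then c w else 0) • toQ w :=
    Finset.sum_congr rfl fun w hw => by rw [if_pos hw]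
  rw [h1]
  exact Finset.sum_subset (Finset.erase_subset v S)
    (fun w _ hnw => by rw [if_neg hnw, zero_smul])

lemma coneOf_eq_erase {d : ℕ} {S : Finset (Fin d → ℤ)} {v : Fin d → ℤ} (hv : v ∈ S)
    (h : toQ v ∈ coneOf (S.erase v)) : coneOf S = coneOf (S.erase v) := by
  apply Set.Subset.antisymm _ coneOf_erase_sub
  intro x hx
  obtain ⟨c, hc, rfl⟩ := hx
  rw [← Finset.add_sum_erase S _ hv]
  exact add_mem_coneOf (smul_mem_coneOf (hc v) h)
    ⟨c, hc, rfl⟩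


lemma dotQ_toQ {d : ℕ} (v w : Fin d → ℤ) : dotQ (toQ v) w = (dotZ v w : ℚ) := by
  unfold dotQ dotZ toQ; push_cast; rfl

lemma dotZ_add_right {d : ℕ} (v a b : Fin d → ℤ) : dotZ v (a + b) = dotZ v a + dotZ v b := by
  unfold dotZ
  rw [← Finset.sum_add_distrib]
  exact Finset.sum_congr rfl fun i _ => by simp [Pi.add_apply, mul_add]

lemma dotZ_smul_left {d : ℕ} (g : ℤ) (v w : Fin d → ℤ) : dotZ (g • v) w = g * dotZ v w := by
  unfold dotZ
  rw [Finset.mul_sum]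
  exact Finset.sum_congr rfl fun i _ => by simp [mul_assoc]

lemma dotQ_sum {d : ℕ} {S : Finset (Fin d → ℤ)} (c : (Fin d → ℤ) → ℚ) (w : Fin d → ℤ) :
    dotQ (∑ v ∈ S, c v • toQ v) w = ∑ v ∈ S, c v * (dotZ v w : ℚ) := by
  unfold dotQ dotZ toQ
  have h1 : ∀ i : Fin d, (∑ v ∈ S, c v • fun j => ((v j : ℚ))) i
      = ∑ v ∈ S, c v * (v i : ℚ) := by
    intro i
    rw [Finset.sum_apply]
    exact Finset.sum_congr rfl fun v _ => rfl
  simp only [h1]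
  push_cast
  calc ∑ i, (∑ v ∈ S, c v * (v i : ℚ)) * (w i : ℚ)
      = ∑ i, ∑ v ∈ S, c v * (v i : ℚ) * (w i : ℚ) :=
        Finset.sum_congr rfl fun i _ => Finset.sum_mul _ _ _
    _ = ∑ v ∈ S, ∑ i, c v * (v i : ℚ) * (w i : ℚ) := Finset.sum_comm
    _ = ∑ v ∈ S, c v * ∑ i, (v i : ℚ) * (w i : ℚ) := by
        refine Finset.sum_congr rfl fun v _ => ?_
        rw [Finset.mul_sum]
        exact Finset.sum_congr rfl fun i _ => by ring

lemma toQ_eq_zero {d : ℕ} {v : Fin d → ℤ} (h : toQ v = 0) : v = 0 := by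
  funext i
  have := congrFun h i
  simpa [toQ] using this

/-- if a nonnegative combination of elements of a strictly convex cone is zero,
every term is zero. -/
lemma kill {d : ℕ} {C : Set (Fin d → ℚ)} {S : Finset (Fin d → ℤ)}
    (hC : C = coneOf S) (hconv : StrictConvexCone C)
    {T : Finset (Fin d → ℤ)} (hT : ∀ w ∈ T, toQ w ∈ C) {c : (Fin d → ℤ) → ℚ}
    (hc : ∀ w, 0 ≤ c w) (hsum : ∑ w ∈ T, c w • toQ w = 0) :
    ∀ w ∈ T, c w • toQ w = 0 := by
  intro w hw
  have hmem : c w • toQ w ∈ C := by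
    rw [hC]; exact smul_mem_coneOf (hc w) (hC ▸ hT w hw)
  have hneg : -(c w • toQ w) ∈ C := by
    have heq : -(c w • toQ w) = ∑ u ∈ T.erase w, c u • toQ u := by
      have h2 := Finset.add_sum_erase T (fun u => c u • toQ u) hw
      rw [← h2] at hsum
      linear_combination (norm := abel) -hsum
    rw [heq, hC]
    exact sum_mem_coneOf fun u hu =>
      smul_mem_coneOf (hc u) (hC ▸ hT u (Finset.mem_of_mem_erase hu))
  exact hconv _ hmem hneg

lemma toQ_smul {d : ℕ} (g : ℤ) (v : Fin d → ℤ) : toQ (g • v) = (g : ℚ) • toQ v := by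
  funext i; simp [toQ]

/-- every nonzero integer vector is a positive multiple of a primitive vector. -/
lemma exists_prim {d : ℕ} (v : Fin d → ℤ) (hv : v ≠ 0) :
    ∃ (p : Fin d → ℤ) (g : ℤ), 0 < g ∧ v = g • p ∧
      ∀ (k : ℤ) (w : Fin d → ℤ), p = k • w → IsUnit k := by
  classical
  set g : ℤ := Finset.univ.gcd v with hg
  have hgdvd : ∀ i, g ∣ v i := fun i => Finset.gcd_dvd (Finset.mem_univ i)
  have hg0 : g ≠ 0 := by
    intro h
    apply hv
    funext i
    have h2 := hgdvd i
    rw [h] at h2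
    simpa using zero_dvd_iff.mp h2
  have hgnn : 0 ≤ g := Int.nonneg_of_normalize_eq_self Finset.normalize_gcd
  have hgpos : 0 < g := lt_of_le_of_ne hgnn (Ne.symm hg0)
  refine ⟨fun i => v i / g, g, hgpos, ?_, ?_⟩
  · funext i
    simp only [Pi.smul_apply, smul_eq_mul]
    exact (Int.mul_ediv_cancel' (hgdvd i)).symm
  · intro k w hkw
    have hdvd : ∀ i, g * k ∣ v i := by
      intro i
      have h1 : v i = g * (k * w i) := by
        have := congrFun hkw i
        simp only [Pi.smul_apply, smul_eq_mul] at this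
        rw [← this]
        exact (Int.mul_ediv_cancel' (hgdvd i)).symm
      exact ⟨w i, by rw [h1]; ring⟩
    have hdg : g * k ∣ g := Finset.dvd_gcd fun i _ => hdvd i
    obtain ⟨m, hm⟩ := hdg
    have : g * (k * m) = g * 1 := by rw [← mul_assoc, ← hm, mul_one]
    have hkm : k * m = 1 := mul_left_cancel₀ hg0 this
    exact IsUnit.of_mul_eq_one m hkm

/-- an essential generator of a strictly convex cone spans an extremal ray. -/
lemma essential_extremal {d : ℕ} {C : Set (Fin d → ℚ)} {S : Finset (Fin d → ℤ)}
    (hC : C = coneOf S) (hconv : StrictConvexCone C)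
    (hess : ∀ w ∈ S, toQ w ∉ coneOf (S.erase w))
    {v : Fin d → ℤ} (hv : v ∈ S) :
    ∀ x ∈ C, ∀ y ∈ C, OnRay v (x + y) → OnRay v x := by
  classical
  intro x hx y hy hray
  obtain ⟨q, hq0, hqe⟩ := hray
  rw [hC] at hx hy
  obtain ⟨a, ha, rfl⟩ := hx
  obtain ⟨b, hb, rfl⟩ := hy
  set s : ℚ := a v + b v with hs
  have hsum : ∑ w ∈ S, (a w + b w) • toQ w = q • toQ v := by
    rw [← hqe, ← Finset.sum_add_distrib]
    exact Finset.sum_congr rfl fun w _ => by rw [add_smul]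
  rcases lt_or_ge s q with hlt | hge
  · -- s < q : contradiction with essentiality
    exfalso
    apply hess v hv
    have hsplit : s • toQ v + ∑ w ∈ S.erase v, (a w + b w) • toQ w = q • toQ v := by
      rw [← hsum, Finset.add_sum_erase S (fun w => (a w + b w) • toQ w) hv]
    have hv_eq : toQ v = ∑ w ∈ S.erase v, ((a w + b w) * (q - s)⁻¹) • toQ w := by
      have h2 : (q - s) • toQ v = ∑ w ∈ S.erase v, (a w + b w) • toQ w := by
        rw [sub_smul]
        linear_combination (norm := abel) -hsplit
      have hqs : q - s ≠ 0 := ne_of_gt (sub_pos.mpr hlt)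
      calc toQ v = (q - s)⁻¹ • ((q - s) • toQ v) := by
            rw [smul_smul, inv_mul_cancel₀ hqs, one_smul]
        _ = ∑ w ∈ S.erase v, ((a w + b w) * (q - s)⁻¹) • toQ w := by
            rw [h2, Finset.smul_sum]
            exact Finset.sum_congr rfl fun w _ => by rw [smul_smul]; ring_nf
    rw [hv_eq]
    refine ⟨fun w => (a w + b w) * (q - s)⁻¹, fun w => ?_, rfl⟩
    have h7 : (0:ℚ) ≤ (q - s)⁻¹ := le_of_lt (inv_pos.mpr (sub_pos.mpr hlt))
    exact mul_nonneg (by have := ha w; have := hb w; linarith) h7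
  · -- q ≤ s : all other coefficients vanish
    set c : (Fin d → ℤ) → ℚ := fun w => if w = v then a v + b v - q else a w + b w with hcdef
    have hczero : ∑ w ∈ S, c w • toQ w = 0 := by
      have h3 : ∑ w ∈ S, c w • toQ w
          = ∑ w ∈ S, (a w + b w) • toQ w - ∑ w ∈ S, (if w = v then q else 0) • toQ w := by
        rw [← Finset.sum_sub_distrib]
        refine Finset.sum_congr rfl fun w hw => ?_
        rw [← sub_smul]
        congr 1
        by_cases hwv : w = v
        · subst hwv; simp [hcdef]
        · simp [hcdef, hwv]
      have h4 : ∑ w ∈ S, (if w = v then q else 0) • toQ w = q • toQ v := by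
        simp only [ite_smul, zero_smul]
        rw [Finset.sum_ite_eq' S v (fun w => q • toQ w), if_pos hv]
      rw [h3, h4, hsum, sub_self]
    have hcnn : ∀ w, 0 ≤ c w := by
      intro w
      by_cases hwv : w = v
      · subst hwv; simp only [hcdef, if_pos rfl]; linarith
      · simp only [hcdef, if_neg hwv]; have := ha w; have := hb w; linarith
    have hkill := kill hC hconv (fun w hw => hC ▸ mem_coneOf_self hw) hcnn hczero
    have hab0 : ∀ w ∈ S.erase v, a w = 0 ∧ b w = 0 := by
      intro w hw
      have hwv : w ≠ v := Finset.ne_of_mem_erase hw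
      have h5 := hkill w (Finset.mem_of_mem_erase hw)
      simp only [hcdef, if_neg hwv] at h5
      have hw0 : w ≠ 0 := by
        intro h0
        apply hess w (Finset.mem_of_mem_erase hw)
        rw [h0]
        have : toQ (0 : Fin d → ℤ) = 0 := by funext i; simp [toQ]
        rw [this]
        exact zero_mem_coneOf _
      have htw : toQ w ≠ 0 := fun h => hw0 (toQ_eq_zero h)
      have habz : a w + b w = 0 := by
        by_contra hne
        exact htw (by
          have := smul_eq_zero.mp h5
          tauto)
      constructor <;> [skip; skip] <;> (have := ha w; have := hb w; linarith)
    refine ⟨a v, ha v, ?_⟩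
    rw [← Finset.add_sum_erase S (fun w => a w • toQ w) hv]
    have h6 : ∑ w ∈ S.erase v, a w • toQ w = 0 :=
      Finset.sum_eq_zero fun w hw => by rw [(hab0 w hw).1, zero_smul]
    rw [h6, add_zero]

/-- every finitely generated cone has a generating set all of whose members are essential. -/
lemma reduce {d : ℕ} (S : Finset (Fin d → ℤ)) :
    ∃ S' : Finset (Fin d → ℤ), S' ⊆ S ∧ coneOf S' = coneOf S ∧
      ∀ v ∈ S', toQ v ∉ coneOf (S'.erase v) := by
  classical
  induction S using Finset.strongInduction with
  | _ S ih =>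
    by_cases h : ∀ v ∈ S, toQ v ∉ coneOf (S.erase v)
    · exact ⟨S, Finset.Subset.refl S, rfl, h⟩
    · push_neg at h
      obtain ⟨v, hv, hmem⟩ := h
      obtain ⟨S', hsub, heq, hess⟩ := ih (S.erase v) (Finset.erase_ssubset hv)
      exact ⟨S', hsub.trans (Finset.erase_subset v S),
        heq.trans (coneOf_eq_erase hv hmem).symm, hess⟩

lemma cast_dot_nonneg {d : ℕ} {v w : Fin d → ℤ} (h : 0 ≤ dotQ (toQ v) w) : 0 ≤ dotZ v w := by
  rw [dotQ_toQ] at h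
  exact_mod_cast h

/-- the key well-definedness statement. -/
lemma key_lemma {d : ℕ} {C : Set (Fin d → ℚ)} {S : Finset (Fin d → ℤ)}
    (hC : IsConeOf C S) (hconv : StrictConvexCone C) {ρ μ : Fin d → ℤ}
    (hroot : IsDemazureRoot C ρ μ) (lam : Fin d → ℤ)
    (hlam : ∀ x ∈ C, 0 ≤ dotQ x lam) (hne : dotZ ρ lam ≠ 0) :
    ∀ x ∈ C, 0 ≤ dotQ x (lam + μ) := by
  classical
  have hC0 : C = coneOf S := hC
  obtain ⟨S', hsub, hSeq, hess⟩ := reduce S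
  have hC' : C = coneOf S' := by rw [hC0, hSeq]
  obtain ⟨⟨hρprim, hρC, hρface⟩, hρμ, hother⟩ := hroot
  have hρ1 : 1 ≤ dotZ ρ lam := by
    have h0 : 0 ≤ dotZ ρ lam := cast_dot_nonneg (hlam _ hρC)
    omega
  -- each essential generator pairs nonnegatively with lam + μ
  have hgen : ∀ v ∈ S', 0 ≤ dotZ v (lam + μ) := by
    intro v hv
    have htv : toQ v ∈ C := by rw [hC']; exact mem_coneOf_self hv
    have hvne : v ≠ 0 := by
      intro h0
      apply hess v hv
      rw [h0]
      have : toQ (0 : Fin d → ℤ) = 0 := by funext i; simp [toQ]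
      rw [this]
      exact zero_mem_coneOf _
    obtain ⟨p, g, hgpos, hvg, hprim⟩ := exists_prim v hvne
    have hgQ : (0:ℚ) < (g:ℚ) := by exact_mod_cast hgpos
    have htoQ : toQ v = (g:ℚ) • toQ p := by rw [hvg, toQ_smul]
    have hvface := essential_extremal hC' hconv hess hv
    have hpC : toQ p ∈ C := by
      have : toQ p = (g:ℚ)⁻¹ • toQ v := by
        rw [htoQ, smul_smul, inv_mul_cancel₀ (ne_of_gt hgQ), one_smul]
      rw [this, hC']
      exact smul_mem_coneOf (le_of_lt (inv_pos.mpr hgQ)) (hC' ▸ htv)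
    have hpface : ∀ x ∈ C, ∀ y ∈ C, OnRay p (x + y) → OnRay p x := by
      intro x hx y hy ⟨q, hq0, hqe⟩
      have : OnRay v (x + y) := by
        refine ⟨q * (g:ℚ)⁻¹, mul_nonneg hq0 (le_of_lt (inv_pos.mpr hgQ)), ?_⟩
        rw [hqe, htoQ, smul_smul]
        congr 1
        field_simp
      obtain ⟨q', hq'0, hq'e⟩ := hvface x hx y hy this
      refine ⟨q' * (g:ℚ), mul_nonneg hq'0 (le_of_lt hgQ), ?_⟩
      rw [hq'e, htoQ, smul_smul]
    have hpgen : IsPrimRayGen C p := ⟨hprim, hpC, hpface⟩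
    by_cases hp : p = ρ
    · subst hp
      rw [hvg, dotZ_smul_left, dotZ_add_right, hρμ]
      exact mul_nonneg (le_of_lt hgpos) (by omega)
    · have hpμ : 0 ≤ dotZ p μ := hother p hpgen hp
      have hvμ : 0 ≤ dotZ v μ := by
        rw [hvg, dotZ_smul_left]
        exact mul_nonneg (le_of_lt hgpos) hpμ
      have hvlam : 0 ≤ dotZ v lam := cast_dot_nonneg (hlam _ htv)
      rw [dotZ_add_right]
      omega
  intro x hx
  rw [hC'] at hx
  obtain ⟨c, hc, rfl⟩ := hx
  rw [dotQ_sum]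
  refine Finset.sum_nonneg fun v hv => mul_nonneg (hc v) ?_
  exact_mod_cast hgen v hv

/-- For a strictly convex finitely generated cone `C`, a primitive ray
generator `ρ` and a Demazure root `μ` of `C` with respect to `ρ`, the rule
`∂_μ(f_λ) = ⟨ρ,λ⟩ f_{λ+μ}` gives a well-defined derivation of the monoid algebra
`A(C) = ⊕_{λ ∈ Γ(C)} K f_λ`; in particular `⟨ρ,λ⟩ ≠ 0` forces `λ + μ ∈ Γ(C)`. -/
theorem demazure_root_gives_derivation {K : Type*} [Field K] [CharZero K] {d : ℕ}
    (C : Set (Fin d → ℚ)) (S : Finset (Fin d → ℤ)) (hC : IsConeOf C S)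
    (hconv : StrictConvexCone C) (ρ μ : Fin d → ℤ)
    (hroot : IsDemazureRoot C ρ μ) :
    (∀ lam ∈ GammaC C, dotZ ρ lam ≠ 0 → lam + μ ∈ GammaC C) ∧
    ∃ D : Derivation K (AddMonoidAlgebra K (GammaC C)) (AddMonoidAlgebra K (GammaC C)),
      (∀ (lam : Fin d → ℤ) (hlam : lam ∈ GammaC C) (h2 : lam + μ ∈ GammaC C),
        D (AddMonoidAlgebra.single ⟨lam, hlam⟩ 1) =
          (dotZ ρ lam : K) • AddMonoidAlgebra.single ⟨lam + μ, h2⟩ 1) ∧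
      (∀ (lam : Fin d → ℤ) (hlam : lam ∈ GammaC C), lam + μ ∉ GammaC C →
        D (AddMonoidAlgebra.single ⟨lam, hlam⟩ 1) = 0) := by
  classical
  have part1 : ∀ lam ∈ GammaC C, dotZ ρ lam ≠ 0 → lam + μ ∈ GammaC C := by
    intro lam hlam hne x hx
    exact key_lemma hC hconv hroot lam hlam hne x hx
  refine ⟨part1, ?_⟩
  set Γ := GammaC C with hΓ
  set g : Γ → AddMonoidAlgebra K Γ := fun a =>
    if h : ((a : Fin d → ℤ) + μ) ∈ Γ then
      (dotZ ρ (a : Fin d → ℤ) : K) • AddMonoidAlgebra.single (⟨(a : Fin d → ℤ) + μ, h⟩ : Γ) 1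
    else 0 with hgdef
  set D0 : AddMonoidAlgebra K Γ →ₗ[K] AddMonoidAlgebra K Γ :=
    Finsupp.lsum K (fun a => LinearMap.smulRight (LinearMap.id : K →ₗ[K] K) (g a)) ∘ₗ
      (AddMonoidAlgebra.coeffLinearEquiv K).toLinearMap with hD0def
  have hD0single : ∀ (a : Γ) (ca : K), D0 (AddMonoidAlgebra.single a ca) = ca • g a := by
    intro a ca
    rw [hD0def]
    simp only [LinearMap.coe_comp, Function.comp_apply, LinearEquiv.coe_coe,
      AddMonoidAlgebra.coeffLinearEquiv_apply, AddMonoidAlgebra.coeff_single, Finsupp.lsum_single,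
      LinearMap.smulRight_apply, LinearMap.id_apply]
  have hzerocast : ∀ x : Γ, ((x : Fin d → ℤ) + μ) ∉ Γ → (dotZ ρ (x : Fin d → ℤ) : K) = 0 := by
    intro x hx
    have h0 : dotZ ρ (x : Fin d → ℤ) = 0 := by
      by_contra hne
      exact hx (part1 _ x.2 hne)
    exact_mod_cast congrArg (fun n : ℤ => (n : K)) h0
  -- the product rule on singles
  have hg_add : ∀ a b : Γ, g (a + b) =
      AddMonoidAlgebra.single a 1 * g b + AddMonoidAlgebra.single b 1 * g a := by
    intro a b
    have hcoe : ((a + b : Γ) : Fin d → ℤ) = (a : Fin d → ℤ) + (b : Fin d → ℤ) := rfl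
    have hdots : (dotZ ρ ((a + b : Γ) : Fin d → ℤ) : K)
        = (dotZ ρ (a : Fin d → ℤ) : K) + (dotZ ρ (b : Fin d → ℤ) : K) := by
      rw [hcoe, dotZ_add_right]
      push_cast
      ring
    by_cases hab : (((a + b : Γ) : Fin d → ℤ) + μ) ∈ Γ
    · by_cases ha : ((a : Fin d → ℤ) + μ) ∈ Γ <;> by_cases hb : ((b : Fin d → ℤ) + μ) ∈ Γ
      · -- both
        have e1 : a + (⟨(b : Fin d → ℤ) + μ, hb⟩ : Γ) = ⟨((a + b : Γ) : Fin d → ℤ) + μ, hab⟩ :=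
          Subtype.ext (by
            show (a : Fin d → ℤ) + ((b : Fin d → ℤ) + μ) = ((a + b : Γ) : Fin d → ℤ) + μ
            rw [hcoe, add_assoc])
        have e2 : b + (⟨(a : Fin d → ℤ) + μ, ha⟩ : Γ) = ⟨((a + b : Γ) : Fin d → ℤ) + μ, hab⟩ :=
          Subtype.ext (by
            show (b : Fin d → ℤ) + ((a : Fin d → ℤ) + μ) = ((a + b : Γ) : Fin d → ℤ) + μ
            rw [hcoe, ← add_assoc, add_comm (b : Fin d → ℤ) (a : Fin d → ℤ)])
        rw [hgdef]
        simp only [dif_pos hab, dif_pos ha, dif_pos hb]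
        rw [mul_smul_comm, mul_smul_comm, AddMonoidAlgebra.single_mul_single,
          AddMonoidAlgebra.single_mul_single, one_mul, e1, e2, hdots, add_smul]
        rw [add_comm]
      · -- a yes, b no
        have e2 : b + (⟨(a : Fin d → ℤ) + μ, ha⟩ : Γ) = ⟨((a + b : Γ) : Fin d → ℤ) + μ, hab⟩ :=
          Subtype.ext (by
            show (b : Fin d → ℤ) + ((a : Fin d → ℤ) + μ) = ((a + b : Γ) : Fin d → ℤ) + μ
            rw [hcoe, ← add_assoc, add_comm (b : Fin d → ℤ) (a : Fin d → ℤ)])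
        rw [hgdef]
        simp only [dif_pos hab, dif_pos ha, dif_neg hb]
        rw [mul_zero, zero_add, mul_smul_comm, AddMonoidAlgebra.single_mul_single, one_mul, e2,
          hdots, hzerocast b hb, add_zero]
      · -- a no, b yes
        have e1 : a + (⟨(b : Fin d → ℤ) + μ, hb⟩ : Γ) = ⟨((a + b : Γ) : Fin d → ℤ) + μ, hab⟩ :=
          Subtype.ext (by
            show (a : Fin d → ℤ) + ((b : Fin d → ℤ) + μ) = ((a + b : Γ) : Fin d → ℤ) + μ
            rw [hcoe, add_assoc])
        rw [hgdef]
        simp only [dif_pos hab, dif_pos hb, dif_neg ha]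
        rw [mul_zero, add_zero, mul_smul_comm, AddMonoidAlgebra.single_mul_single, one_mul, e1,
          hdots, hzerocast a ha, zero_add]
      · rw [hgdef]
        simp only [dif_pos hab, dif_neg ha, dif_neg hb]
        rw [mul_zero, mul_zero, add_zero, hdots, hzerocast a ha, hzerocast b hb, add_zero,
          zero_smul]
    · -- a + b + μ not in Γ : then neither a + μ nor b + μ is
      have ha : ((a : Fin d → ℤ) + μ) ∉ Γ := by
        intro h
        exact hab (by
          have := Γ.add_mem b.2 h
          have heq : (b : Fin d → ℤ) + ((a : Fin d → ℤ) + μ)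
              = ((a + b : Γ) : Fin d → ℤ) + μ := by
            rw [hcoe, ← add_assoc, add_comm (b : Fin d → ℤ) (a : Fin d → ℤ)]
          rwa [heq] at this)
      have hb : ((b : Fin d → ℤ) + μ) ∉ Γ := by
        intro h
        exact hab (by
          have := Γ.add_mem a.2 h
          have heq : (a : Fin d → ℤ) + ((b : Fin d → ℤ) + μ)
              = ((a + b : Γ) : Fin d → ℤ) + μ := by rw [hcoe, add_assoc]
          rwa [heq] at this)
      rw [hgdef]
      simp only [dif_neg hab, dif_neg ha, dif_neg hb]
      rw [mul_zero, mul_zero, add_zero]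
  have hmul : ∀ x y : AddMonoidAlgebra K Γ, D0 (x * y) = x • D0 y + y • D0 x := by
    intro x y
    induction x using AddMonoidAlgebra.induction_linear with
    | zero => simp
    | add f h ihf ihh =>
      rw [add_mul, map_add, ihf, ihh, map_add]
      simp only [smul_eq_mul, add_mul, mul_add]
      abel
    | single a ca =>
      induction y using AddMonoidAlgebra.induction_linear with
      | zero => simp
      | add f h ihf ihh =>
        rw [mul_add, map_add, ihf, ihh, map_add]
        simp only [smul_eq_mul, add_mul, mul_add]
        abel
      | single b cb =>
        have hss : (AddMonoidAlgebra.single a ca : AddMonoidAlgebra K Γ)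
            * AddMonoidAlgebra.single b cb = AddMonoidAlgebra.single (a + b) (ca * cb) :=
          AddMonoidAlgebra.single_mul_single ..
        have hkey : ∀ (x : Γ) (c : K) (z : AddMonoidAlgebra K Γ),
            AddMonoidAlgebra.single x c * z = c • (AddMonoidAlgebra.single x 1 * z) := by
          intro x c z
          rw [← smul_mul_assoc]
          congr 1
          rw [AddMonoidAlgebra.smul_single', mul_one]
        rw [hss, hD0single, hD0single, hD0single, hg_add a b, smul_add]
        simp only [smul_eq_mul]
        rw [mul_smul_comm, mul_smul_comm, hkey a ca (g b), hkey b cb (g a)]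
        match_scalars <;> ring
  refine ⟨Derivation.mk' D0 hmul, ?_, ?_⟩
  · intro lam hlam h2
    rw [Derivation.coe_mk']
    rw [hD0single, one_smul, hgdef]
    exact dif_pos h2
  · intro lam hlam h2
    rw [Derivation.coe_mk']
    rw [hD0single, one_smul, hgdef]
    exact dif_neg h2
end

section
/- Any two homogeneous locally nilpotent derivations of A(C) of the same degree μ ∈ M are proportional: if D₁ and D₂ are nonzero locally nilpotent derivations with D_i(f_λ) ∈ K·f_{λ+μ} for all λ, then D₂ = c·D₁ for some c ∈ K. -/
set_option linter.unusedSectionVars false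

section AuxLND

variable {K : Type*} [Field K] [CharZero K] {d : ℕ} {Λ : AddSubmonoid (Fin d → ℤ)} {μ : Fin d → ℤ}

private lemma single_ne_aux (a : ↥Λ) : (AddMonoidAlgebra.single a (1:K)) ≠ 0 :=
  fun h => one_ne_zero (AddMonoidAlgebra.single_eq_zero.1 h)

private lemma smul_single_cancel_aux {a : ↥Λ} {c c' : K}
    (h : c • (AddMonoidAlgebra.single a 1 : AddMonoidAlgebra K Λ) = c' • AddMonoidAlgebra.single a 1) :
    c = c' := by
  have h2 : (c - c') • (AddMonoidAlgebra.single a 1 : AddMonoidAlgebra K Λ) = 0 := by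
    rw [sub_smul, h, sub_self]
  rcases smul_eq_zero.1 h2 with h' | h'
  · exact sub_eq_zero.1 h'
  · exact absurd h' (single_ne_aux a)

private lemma phi_add_aux
    (D : Derivation K (AddMonoidAlgebra K Λ) (AddMonoidAlgebra K Λ)) (φ : ↥Λ → K)
    (hφ : ∀ (l : ↥Λ) (h2 : ↑l + μ ∈ Λ),
      D (AddMonoidAlgebra.single l 1) = φ l • AddMonoidAlgebra.single ⟨↑l + μ, h2⟩ 1)
    (hφ0 : ∀ l : ↥Λ, ↑l + μ ∉ Λ → φ l = 0)
    (hD0 : ∀ l : ↥Λ, ↑l + μ ∉ Λ → D (AddMonoidAlgebra.single l 1) = 0)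
    (l n : ↥Λ) : φ (l + n) = φ l + φ n := by
  have hmul : (AddMonoidAlgebra.single l 1 : AddMonoidAlgebra K Λ) * AddMonoidAlgebra.single n 1
      = AddMonoidAlgebra.single (l + n) 1 := by
    rw [AddMonoidAlgebra.single_mul_single, one_mul]
  have hlei : D (AddMonoidAlgebra.single (l + n) 1)
      = AddMonoidAlgebra.single l 1 * D (AddMonoidAlgebra.single n 1)
        + AddMonoidAlgebra.single n 1 * D (AddMonoidAlgebra.single l 1) := by
    rw [← hmul, D.leibniz]; simp [smul_eq_mul]
  by_cases hl : (↑l : Fin d → ℤ) + μ ∈ Λ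
  · have hsum : (↑(l + n) : Fin d → ℤ) + μ ∈ Λ := by
      have := Λ.add_mem hl n.2
      convert this using 1
      push_cast
      ring
    have idx2 : (n + (⟨↑l + μ, hl⟩ : ↥Λ)) = (⟨↑(l + n) + μ, hsum⟩ : ↥Λ) :=
      Subtype.ext (by push_cast; ring)
    have t2 : (AddMonoidAlgebra.single n 1 : AddMonoidAlgebra K Λ) * D (AddMonoidAlgebra.single l 1)
        = φ l • AddMonoidAlgebra.single ⟨↑(l + n) + μ, hsum⟩ 1 := by
      rw [hφ l hl, mul_smul_comm, AddMonoidAlgebra.single_mul_single, one_mul, idx2]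
    by_cases hn : (↑n : Fin d → ℤ) + μ ∈ Λ
    · have idx1 : (l + (⟨↑n + μ, hn⟩ : ↥Λ)) = (⟨↑(l + n) + μ, hsum⟩ : ↥Λ) :=
        Subtype.ext (by push_cast; ring)
      have t1 : (AddMonoidAlgebra.single l 1 : AddMonoidAlgebra K Λ) * D (AddMonoidAlgebra.single n 1)
          = φ n • AddMonoidAlgebra.single ⟨↑(l + n) + μ, hsum⟩ 1 := by
        rw [hφ n hn, mul_smul_comm, AddMonoidAlgebra.single_mul_single, one_mul, idx1]
      have heq := hlei
      rw [t1, t2, hφ (l + n) hsum, ← add_smul, add_comm (φ n) (φ l)] at heq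
      exact smul_single_cancel_aux heq
    · have t1 : (AddMonoidAlgebra.single l 1 : AddMonoidAlgebra K Λ) * D (AddMonoidAlgebra.single n 1) = 0 := by
        rw [hD0 n hn, mul_zero]
      have heq := hlei
      rw [t1, t2, zero_add, hφ (l + n) hsum] at heq
      rw [hφ0 n hn, add_zero]
      exact smul_single_cancel_aux heq
  · have t2 : (AddMonoidAlgebra.single n 1 : AddMonoidAlgebra K Λ) * D (AddMonoidAlgebra.single l 1) = 0 := by
      rw [hD0 l hl, mul_zero]
    by_cases hn : (↑n : Fin d → ℤ) + μ ∈ Λ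
    · have hsum : (↑(l + n) : Fin d → ℤ) + μ ∈ Λ := by
        have := Λ.add_mem hn l.2
        convert this using 1
        push_cast
        ring
      have idx1 : (l + (⟨↑n + μ, hn⟩ : ↥Λ)) = (⟨↑(l + n) + μ, hsum⟩ : ↥Λ) :=
        Subtype.ext (by push_cast; ring)
      have t1 : (AddMonoidAlgebra.single l 1 : AddMonoidAlgebra K Λ) * D (AddMonoidAlgebra.single n 1)
          = φ n • AddMonoidAlgebra.single ⟨↑(l + n) + μ, hsum⟩ 1 := by
        rw [hφ n hn, mul_smul_comm, AddMonoidAlgebra.single_mul_single, one_mul, idx1]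
      have heq := hlei
      rw [t1, t2, add_zero, hφ (l + n) hsum] at heq
      rw [hφ0 l hl, zero_add]
      exact smul_single_cancel_aux heq
    · rw [hφ0 l hl, hφ0 n hn, add_zero]
      by_cases hsum : (↑(l + n) : Fin d → ℤ) + μ ∈ Λ
      · have t1 : (AddMonoidAlgebra.single l 1 : AddMonoidAlgebra K Λ) * D (AddMonoidAlgebra.single n 1) = 0 := by
          rw [hD0 n hn, mul_zero]
        have heq := hlei
        rw [t1, t2, add_zero, hφ (l + n) hsum] at heq
        have heq' : φ (l + n) • (AddMonoidAlgebra.single (⟨↑(l + n) + μ, hsum⟩ : ↥Λ) 1 : AddMonoidAlgebra K Λ)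
            = (0 : K) • AddMonoidAlgebra.single (⟨↑(l + n) + μ, hsum⟩ : ↥Λ) 1 := by
          rw [zero_smul]; exact heq
        exact smul_single_cancel_aux heq'
      · exact hφ0 (l + n) hsum

noncomputable def lext (hgen : ∀ m : Fin d → ℤ, ∃ a ∈ Λ, ∃ b ∈ Λ, m = a - b)
    (φ : ↥Λ → K) (m : Fin d → ℤ) : K :=
  φ ⟨(hgen m).choose, (hgen m).choose_spec.1⟩ -
    φ ⟨(hgen m).choose_spec.2.choose, (hgen m).choose_spec.2.choose_spec.1⟩

variable {hgen : ∀ m : Fin d → ℤ, ∃ a ∈ Λ, ∃ b ∈ Λ, m = a - b} {φ : ↥Λ → K}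

private lemma sub_helper_aux (hadd : ∀ l n : ↥Λ, φ (l + n) = φ l + φ n)
    {A B a b : ↥Λ} (e : A + b = a + B) : φ A - φ B = φ a - φ b := by
  have e1 := hadd A b
  have e2 := hadd a B
  rw [e, e2] at e1
  linear_combination -e1

lemma lext_spec (hadd : ∀ l n : ↥Λ, φ (l + n) = φ l + φ n)
    {m : Fin d → ℤ} (a b : ↥Λ) (h : m = ↑a - ↑b) :
    lext hgen φ m = φ a - φ b := by
  have h₀ : m = (hgen m).choose - (hgen m).choose_spec.2.choose :=
    (hgen m).choose_spec.2.choose_spec.2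
  unfold lext
  exact sub_helper_aux hadd (Subtype.ext (sub_eq_sub_iff_add_eq_add.1 (by rw [← h₀, h])))

lemma lext_coe (hadd : ∀ l n : ↥Λ, φ (l + n) = φ l + φ n) (l : ↥Λ) :
    lext hgen φ ↑l = φ l := by
  have h0 : φ 0 = 0 := by
    have := hadd 0 0
    rw [add_zero] at this
    linear_combination -this
  rw [lext_spec hadd l 0 (by simp), h0, sub_zero]

lemma lext_add (hadd : ∀ l n : ↥Λ, φ (l + n) = φ l + φ n) (m m' : Fin d → ℤ) :
    lext hgen φ (m + m') = lext hgen φ m + lext hgen φ m' := by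
  obtain ⟨a, ha, b, hb, hm⟩ := hgen m
  obtain ⟨a', ha', b', hb', hm'⟩ := hgen m'
  have h : m + m' = ↑((⟨a, ha⟩ : ↥Λ) + ⟨a', ha'⟩) - ↑((⟨b, hb⟩ : ↥Λ) + ⟨b', hb'⟩) := by
    push_cast
    rw [hm, hm']
    ring
  rw [lext_spec hadd _ _ h, lext_spec hadd ⟨a, ha⟩ ⟨b, hb⟩ hm, lext_spec hadd ⟨a', ha'⟩ ⟨b', hb'⟩ hm',
    hadd, hadd]
  ring

lemma lext_nsmul (hadd : ∀ l n : ↥Λ, φ (l + n) = φ l + φ n) (x : Fin d → ℤ) (k : ℕ) :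
    lext hgen φ (x + k • μ) = lext hgen φ x + (k : K) * lext hgen φ μ := by
  induction k with
  | zero => simp
  | succ k ih =>
      have h : x + (k + 1) • μ = (x + k • μ) + μ := by
        rw [succ_nsmul]; ring
      rw [h, lext_add hadd, ih]
      push_cast
      ring

lemma chain_aux
    (D : Derivation K (AddMonoidAlgebra K Λ) (AddMonoidAlgebra K Λ))
    (hφ : ∀ (l : ↥Λ) (h2 : ↑l + μ ∈ Λ),
      D (AddMonoidAlgebra.single l 1) = φ l • AddMonoidAlgebra.single ⟨↑l + μ, h2⟩ 1)
    (hφ0 : ∀ l : ↥Λ, ↑l + μ ∉ Λ → φ l = 0)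
    (hadd : ∀ l n : ↥Λ, φ (l + n) = φ l + φ n)
    (hln : ∀ a : AddMonoidAlgebra K Λ, ∃ n : ℕ, (D.toLinearMap ^ n) a = 0)
    (l : ↥Λ) :
    ∃ k : ℕ, (∀ j ≤ k, (↑l : Fin d → ℤ) + j • μ ∈ Λ) ∧ lext hgen φ (↑l + k • μ) = 0 := by
  by_contra hcon
  push_neg at hcon
  have hmem : ∀ k : ℕ, (↑l : Fin d → ℤ) + k • μ ∈ Λ := by
    have hstrong : ∀ k : ℕ, ∀ j ≤ k, (↑l : Fin d → ℤ) + j • μ ∈ Λ := by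
      intro k
      induction k with
      | zero =>
          intro j hj
          interval_cases j
          simpa using l.2
      | succ k ih =>
          intro j hj
          rcases lt_or_eq_of_le hj with h' | h'
          · exact ih j (Nat.lt_succ_iff.1 h')
          · subst h'
            by_contra hnot
            have hz : φ ⟨↑l + k • μ, ih k le_rfl⟩ = 0 := by
              apply hφ0
              intro hmem'
              apply hnot
              have h : (↑l : Fin d → ℤ) + (k+1) • μ = (↑l + k • μ) + μ := by
                rw [succ_nsmul]; ring
              rw [h]
              exact hmem'
            have hl0 : lext hgen φ (↑l + k • μ) = 0 := by
              have := lext_coe (hgen := hgen) hadd ⟨↑l + k • μ, ih k le_rfl⟩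
              rw [this, hz]
            exact hcon k (ih) hl0
    intro k; exact hstrong k k le_rfl
  have hne : ∀ k : ℕ, φ ⟨↑l + k • μ, hmem k⟩ ≠ 0 := by
    intro k h0
    apply hcon k (fun j _ => hmem j)
    rw [lext_coe (hgen := hgen) hadd ⟨↑l + k • μ, hmem k⟩, h0]
  have hpow : ∀ n : ℕ, ∃ c : K, c ≠ 0 ∧
      (D.toLinearMap ^ n) (AddMonoidAlgebra.single l 1)
        = c • AddMonoidAlgebra.single (⟨↑l + n • μ, hmem n⟩ : ↥Λ) 1 := by
    intro n
    induction n with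
    | zero =>
        refine ⟨1, one_ne_zero, ?_⟩
        have h : (⟨↑l + 0 • μ, hmem 0⟩ : ↥Λ) = l := Subtype.ext (by simp)
        rw [h, pow_zero, Module.End.one_apply, one_smul]
    | succ n ih =>
        obtain ⟨c, hc, hcomp⟩ := ih
        have hmem2 : (↑(⟨↑l + n • μ, hmem n⟩ : ↥Λ) : Fin d → ℤ) + μ ∈ Λ := by
          have hmm := hmem (n+1)
          have e : (↑l : Fin d → ℤ) + (n+1) • μ = (↑l + n • μ) + μ := by
            rw [succ_nsmul]; ring
          rw [e] at hmm
          exact hmm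
        have idx : ((⟨↑(⟨↑l + n • μ, hmem n⟩ : ↥Λ) + μ, hmem2⟩ : ↥Λ))
            = (⟨↑l + (n+1) • μ, hmem (n+1)⟩ : ↥Λ) := by
          apply Subtype.ext
          show ((↑l : Fin d → ℤ) + n • μ) + μ = ↑l + (n+1) • μ
          rw [succ_nsmul]; ring
        refine ⟨c * φ ⟨↑l + n • μ, hmem n⟩, mul_ne_zero hc (hne n), ?_⟩
        rw [pow_succ', Module.End.mul_apply]
        have hD : D.toLinearMap ((D.toLinearMap ^ n) (AddMonoidAlgebra.single l 1))
            = D ((D.toLinearMap ^ n) (AddMonoidAlgebra.single l 1)) := rfl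
        rw [hD, hcomp, D.map_smul, hφ _ hmem2, idx, smul_smul]
  obtain ⟨n, hn⟩ := hln (AddMonoidAlgebra.single l 1)
  obtain ⟨c, hc, hcomp⟩ := hpow n
  rw [hcomp] at hn
  rcases smul_eq_zero.1 hn with h' | h'
  · exact hc h'
  · exact single_ne_aux _ h'

private lemma D_zero_of_single_zero
    (D : Derivation K (AddMonoidAlgebra K Λ) (AddMonoidAlgebra K Λ))
    (hz : ∀ l : ↥Λ, D (AddMonoidAlgebra.single l 1) = 0) (a : AddMonoidAlgebra K Λ) :
    D a = 0 := by
  induction a using AddMonoidAlgebra.induction with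
  | zero => simp
  | single_add x b f _ _ ih =>
      have h1 : (AddMonoidAlgebra.single x b : AddMonoidAlgebra K Λ) = b • AddMonoidAlgebra.single x 1 := by
        rw [AddMonoidAlgebra.smul_single, smul_eq_mul, mul_one]
      have h2 : D (AddMonoidAlgebra.single x b + f) = D (AddMonoidAlgebra.single x b) + D f := map_add D _ _
      rw [h2, ih, add_zero, h1, D.map_smul, hz, smul_zero]

end AuxLND

set_option maxHeartbeats 1000000 in
/-- Two nonzero homogeneous locally nilpotent derivations of `A(C)` of the
same degree `μ` are proportional. -/
theorem homogeneous_lnds_same_degree_proportional {K : Type*} [Field K] [CharZero K]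
    [IsAlgClosed K] {d : ℕ}
    (C : Set (Fin d → ℚ)) (S : Finset (Fin d → ℤ)) (hC : IsConeOf C S)
    (hconv : StrictConvexCone C)
    (hgen : ∀ m : Fin d → ℤ, ∃ a ∈ GammaC C, ∃ b ∈ GammaC C, m = a - b)
    (μ : Fin d → ℤ)
    (D₁ D₂ : Derivation K (AddMonoidAlgebra K (GammaC C)) (AddMonoidAlgebra K (GammaC C)))
    (hD₁0 : D₁ ≠ 0) (hD₂0 : D₂ ≠ 0)
    (hhom₁ : ∀ (lam : Fin d → ℤ) (hlam : lam ∈ GammaC C) (h2 : lam + μ ∈ GammaC C),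
      ∃ c : K, D₁ (AddMonoidAlgebra.single ⟨lam, hlam⟩ 1) =
        c • AddMonoidAlgebra.single ⟨lam + μ, h2⟩ 1)
    (hhom₁' : ∀ (lam : Fin d → ℤ) (hlam : lam ∈ GammaC C), lam + μ ∉ GammaC C →
      D₁ (AddMonoidAlgebra.single ⟨lam, hlam⟩ 1) = 0)
    (hhom₂ : ∀ (lam : Fin d → ℤ) (hlam : lam ∈ GammaC C) (h2 : lam + μ ∈ GammaC C),
      ∃ c : K, D₂ (AddMonoidAlgebra.single ⟨lam, hlam⟩ 1) =
        c • AddMonoidAlgebra.single ⟨lam + μ, h2⟩ 1)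
    (hhom₂' : ∀ (lam : Fin d → ℤ) (hlam : lam ∈ GammaC C), lam + μ ∉ GammaC C →
      D₂ (AddMonoidAlgebra.single ⟨lam, hlam⟩ 1) = 0)
    (hln₁ : ∀ a : AddMonoidAlgebra K (GammaC C), ∃ n : ℕ, (D₁.toLinearMap ^ n) a = 0)
    (hln₂ : ∀ a : AddMonoidAlgebra K (GammaC C), ∃ n : ℕ, (D₂.toLinearMap ^ n) a = 0) :
    ∃ c : K, ∀ a : AddMonoidAlgebra K (GammaC C), D₂ a = c • D₁ a := by
  classical
  obtain ⟨φ₁, hφ₁, hφ₁0⟩ : ∃ φ : ↥(GammaC C) → K,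
      (∀ (l : ↥(GammaC C)) (h2 : (↑l : Fin d → ℤ) + μ ∈ GammaC C),
        D₁ (AddMonoidAlgebra.single l 1) = φ l • AddMonoidAlgebra.single ⟨(↑l : Fin d → ℤ) + μ, h2⟩ 1) ∧
      (∀ l : ↥(GammaC C), (↑l : Fin d → ℤ) + μ ∉ GammaC C → φ l = 0) := by
    refine ⟨fun l => if h : (↑l : Fin d → ℤ) + μ ∈ GammaC C then (hhom₁ ↑l l.2 h).choose else 0,
      ?_, ?_⟩
    · intro l h2
      simp only [dif_pos h2]
      exact (hhom₁ ↑l l.2 h2).choose_spec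
    · intro l h2
      simp only [dif_neg h2]
  obtain ⟨φ₂, hφ₂, hφ₂0⟩ : ∃ φ : ↥(GammaC C) → K,
      (∀ (l : ↥(GammaC C)) (h2 : (↑l : Fin d → ℤ) + μ ∈ GammaC C),
        D₂ (AddMonoidAlgebra.single l 1) = φ l • AddMonoidAlgebra.single ⟨(↑l : Fin d → ℤ) + μ, h2⟩ 1) ∧
      (∀ l : ↥(GammaC C), (↑l : Fin d → ℤ) + μ ∉ GammaC C → φ l = 0) := by
    refine ⟨fun l => if h : (↑l : Fin d → ℤ) + μ ∈ GammaC C then (hhom₂ ↑l l.2 h).choose else 0,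
      ?_, ?_⟩
    · intro l h2
      simp only [dif_pos h2]
      exact (hhom₂ ↑l l.2 h2).choose_spec
    · intro l h2
      simp only [dif_neg h2]
  have hD₁z : ∀ l : ↥(GammaC C), (↑l : Fin d → ℤ) + μ ∉ GammaC C →
      D₁ (AddMonoidAlgebra.single l 1) = 0 := fun l h => hhom₁' ↑l l.2 h
  have hD₂z : ∀ l : ↥(GammaC C), (↑l : Fin d → ℤ) + μ ∉ GammaC C →
      D₂ (AddMonoidAlgebra.single l 1) = 0 := fun l h => hhom₂' ↑l l.2 h
  have hadd₁ := phi_add_aux D₁ φ₁ hφ₁ hφ₁0 hD₁z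
  have hadd₂ := phi_add_aux D₂ φ₂ hφ₂ hφ₂0 hD₂z
  have hch₁ := chain_aux (hgen := hgen) D₁ hφ₁ hφ₁0 hadd₁ hln₁
  have hch₂ := chain_aux (hgen := hgen) D₂ hφ₂ hφ₂0 hadd₂ hln₂
  have hμne : ∀ (D : Derivation K (AddMonoidAlgebra K (GammaC C)) (AddMonoidAlgebra K (GammaC C)))
      (φ : ↥(GammaC C) → K),
      (∀ (l : ↥(GammaC C)) (h2 : (↑l : Fin d → ℤ) + μ ∈ GammaC C),
        D (AddMonoidAlgebra.single l 1) = φ l • AddMonoidAlgebra.single ⟨(↑l : Fin d → ℤ) + μ, h2⟩ 1) →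
      (∀ l : ↥(GammaC C), (↑l : Fin d → ℤ) + μ ∉ GammaC C → D (AddMonoidAlgebra.single l 1) = 0) →
      (∀ l n : ↥(GammaC C), φ (l + n) = φ l + φ n) →
      (∀ l : ↥(GammaC C), ∃ k : ℕ, (∀ j ≤ k, (↑l : Fin d → ℤ) + j • μ ∈ GammaC C) ∧
        lext hgen φ ((↑l : Fin d → ℤ) + k • μ) = 0) →
      D ≠ 0 → lext hgen φ μ ≠ 0 := by
    intro D φ hφ hDz hadd hch hD0 h0
    apply hD0
    have hphi : ∀ l, φ l = 0 := by
      intro l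
      obtain ⟨k, hmem, he⟩ := hch l
      rw [lext_nsmul hadd, h0, mul_zero, add_zero, lext_coe hadd] at he
      exact he
    have hzl : ∀ l : ↥(GammaC C), D (AddMonoidAlgebra.single l 1) = 0 := by
      intro l
      by_cases h2 : (↑l : Fin d → ℤ) + μ ∈ GammaC C
      · rw [hφ l h2, hphi, zero_smul]
      · exact hDz l h2
    apply Derivation.ext
    intro a
    simp [D_zero_of_single_zero D hzl a]
  have hμ₁ : lext hgen φ₁ μ ≠ 0 := hμne D₁ φ₁ hφ₁ hD₁z hadd₁ hch₁ hD₁0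
  have hμ₂ : lext hgen φ₂ μ ≠ 0 := hμne D₂ φ₂ hφ₂ hD₂z hadd₂ hch₂ hD₂0
  have key : ∀ (φ : ↥(GammaC C) → K),
      (∀ l n : ↥(GammaC C), φ (l + n) = φ l + φ n) →
      (∀ l : ↥(GammaC C), ∃ k : ℕ, (∀ j ≤ k, (↑l : Fin d → ℤ) + j • μ ∈ GammaC C) ∧
        lext hgen φ ((↑l : Fin d → ℤ) + k • μ) = 0) →
      lext hgen φ μ ≠ 0 →
      ∀ (l : ↥(GammaC C)) (k₁ k₂ : ℕ),
        (∀ j ≤ k₁, (↑l : Fin d → ℤ) + j • μ ∈ GammaC C) →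
        lext hgen φ ((↑l : Fin d → ℤ) + k₂ • μ) = 0 → ¬ k₂ < k₁ := by
    intro φ hadd hch hμ' l k₁ k₂ hm1 he2 hlt
    have hν : (↑l : Fin d → ℤ) + (k₂+1) • μ ∈ GammaC C := hm1 (k₂+1) hlt
    obtain ⟨k', hm', he'⟩ := hch ⟨(↑l : Fin d → ℤ) + (k₂+1) • μ, hν⟩
    have e : (↑(⟨(↑l : Fin d → ℤ) + (k₂+1) • μ, hν⟩ : ↥(GammaC C)) : Fin d → ℤ) + k' • μ
        = (↑l : Fin d → ℤ) + (k₂+1+k') • μ := by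
      show ((↑l : Fin d → ℤ) + (k₂+1) • μ) + k' • μ = (↑l : Fin d → ℤ) + (k₂+1+k') • μ
      rw [add_nsmul]
      ring
    rw [e, lext_nsmul hadd] at he'
    rw [lext_nsmul hadd] at he2
    have hc : ((k₂+1+k' : ℕ) : K) * lext hgen φ μ = ((k₂ : ℕ) : K) * lext hgen φ μ := by
      linear_combination he' - he2
    have h2 := mul_right_cancel₀ hμ' hc
    have h3 : k₂+1+k' = k₂ := Nat.cast_inj.1 h2
    omega
  have prop : ∀ l : ↥(GammaC C),
      lext hgen φ₂ ↑l * lext hgen φ₁ μ = lext hgen φ₁ ↑l * lext hgen φ₂ μ := by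
    intro l
    obtain ⟨k₁, hm1, he1⟩ := hch₁ l
    obtain ⟨k₂, hm2, he2⟩ := hch₂ l
    have hk : k₁ = k₂ := by
      rcases lt_trichotomy k₁ k₂ with h | h | h
      · exact absurd h (key φ₁ hadd₁ hch₁ hμ₁ l k₂ k₁ hm2 he1)
      · exact h
      · exact absurd h (key φ₂ hadd₂ hch₂ hμ₂ l k₁ k₂ hm1 he2)
    subst hk
    rw [lext_nsmul hadd₁] at he1
    rw [lext_nsmul hadd₂] at he2
    linear_combination (lext hgen φ₁ μ) * he2 - (lext hgen φ₂ μ) * he1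
  refine ⟨lext hgen φ₂ μ / lext hgen φ₁ μ, ?_⟩
  have hsingle : ∀ l : ↥(GammaC C),
      D₂ (AddMonoidAlgebra.single l 1)
        = (lext hgen φ₂ μ / lext hgen φ₁ μ) • D₁ (AddMonoidAlgebra.single l 1) := by
    intro l
    by_cases h2 : (↑l : Fin d → ℤ) + μ ∈ GammaC C
    · rw [hφ₂ l h2, hφ₁ l h2, smul_smul]
      congr 1
      have e1 := lext_coe (hgen := hgen) hadd₁ l
      have e2 := lext_coe (hgen := hgen) hadd₂ l
      have hp := prop l
      rw [e1, e2] at hp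
      field_simp
      linear_combination hp
    · rw [hD₂z l h2, hD₁z l h2, smul_zero]
  intro a
  induction a using AddMonoidAlgebra.induction with
  | zero => simp
  | single_add x b f _ _ ih =>
      have h1 : (AddMonoidAlgebra.single x b : AddMonoidAlgebra K (GammaC C))
          = b • AddMonoidAlgebra.single x 1 := by
        rw [AddMonoidAlgebra.smul_single, smul_eq_mul, mul_one]
      have h2 : D₂ (AddMonoidAlgebra.single x b + f) = D₂ (AddMonoidAlgebra.single x b) + D₂ f := map_add D₂ _ _
      have h3 : D₁ (AddMonoidAlgebra.single x b + f) = D₁ (AddMonoidAlgebra.single x b) + D₁ f := map_add D₁ _ _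
      rw [h2, h3, ih, h1, D₂.map_smul, D₁.map_smul, hsingle x, smul_add, smul_comm]
end

section
/- Let V be a finite-dimensional vector space over a field K of characteristic 0 and let g ⊂ gl(V) be a nilpotent Lie subalgebra acting on V so that there is a flag 0 = V₀ ⊂ V₁ ⊂ ... ⊂ V_s = V with g·V_i ⊂ V_{i-1}. Let R be a commutative K-algebra, let ∂_R be a locally nilpotent derivation of R, and define a derivation ∂ on the algebra Sym-free module V ⊗ R viewed inside a commutative algebra A ⊗ R (A containing V as a g-stable subspace with g·V_i ⊂ V_{i-1}) by ∂(g ⊗ f) = Σ_α c_α (e_α g) ⊗ (h_α f) + g ⊗ ∂_R(f) for fixed e_α ∈ g, h_α ∈ R, c_α ∈ K. Then for every i, every g ∈ V_i and f ∈ R, there exists k > 0 with ∂^k(g ⊗ f) ∈ V_{i-1} ⊗ R; in particular ∂ is locally nilpotent on V ⊗ R. -/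
/-!
Modulo `V_i ⊗ R`, the derivation `∂` acts on `g ⊗ f` with `g ∈ V_{i+1}` as `g ⊗ ∂_R f`, because
the terms `(δ_α g) ⊗ (h_α f)` land in `V_i ⊗ R`, which `∂` preserves (the flag is `δ_α`-stable).
Hence `∂^k (g ⊗ f) ≡ g ⊗ ∂_R^k f`, and once `∂_R^k f = 0` we have dropped one step of the flag;
induction on the flag then gives local nilpotency on `V_s ⊗ R`.
-/

open TensorProduct

namespace Module.End

variable {K M : Type*} [CommRing K] [AddCommGroup M] [Module K M]

theorem mem_maxGenEigenspace_zero_iff (E : End K M) (x : M) :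
    x ∈ E.maxGenEigenspace 0 ↔ ∃ n : ℕ, (E ^ n) x = 0 := by
  simp

theorem mem_maxGenEigenspace_zero_of_pow_apply_mem {E : End K M} {x : M} {n : ℕ}
    (hx : (E ^ n) x ∈ E.maxGenEigenspace 0) : x ∈ E.maxGenEigenspace 0 := by
  obtain ⟨m, hm⟩ := (mem_maxGenEigenspace_zero_iff E _).1 hx
  exact (mem_maxGenEigenspace_zero_iff E x).2 ⟨m + n, by rw [pow_add, mul_apply, hm]⟩

theorem le_maxGenEigenspace_zero_of_pow_apply_mem {E : End K M} {W : ℕ → Submodule K M}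
    (hW0 : W 0 = ⊥) {s : ℕ → Set M} (hs : ∀ i, W (i + 1) = Submodule.span K (s i))
    (hE : ∀ i, ∀ x ∈ s i, ∃ n : ℕ, (E ^ n) x ∈ W i) (i : ℕ) :
    W i ≤ E.maxGenEigenspace 0 := by
  induction i with
  | zero => simp [hW0]
  | succ i ih =>
    rw [hs, Submodule.span_le]
    intro x hx
    obtain ⟨n, hn⟩ := hE i x hx
    exact mem_maxGenEigenspace_zero_of_pow_apply_mem (ih hn)

theorem pow_apply_sub_mem_of_apply_sub_mem {N' : Type*} [AddCommGroup N'] [Module K N']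
    {E : End K M} {N : Submodule K M} (hN : N ≤ N.comap E) {L : N' →ₗ[K] M} {d : End K N'}
    (hL : ∀ r, E (L r) - L (d r) ∈ N) (k : ℕ) (r : N') :
    (E ^ k) (L r) - L ((d ^ k) r) ∈ N := by
  induction k with
  | zero => simp
  | succ k ih =>
    have hsplit : (E ^ (k + 1)) (L r) - L ((d ^ (k + 1)) r) =
        E ((E ^ k) (L r) - L ((d ^ k) r)) + (E (L ((d ^ k) r)) - L (d ((d ^ k) r))) := by
      rw [pow_succ', pow_succ', mul_apply, mul_apply, map_sub]
      abel
    rw [hsplit]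
    exact N.add_mem (hN ih) (hL _)

theorem map_le_self_of_map_succ_le {f : End K M} {V : ℕ → Submodule K M} (hV0 : V 0 = ⊥)
    (hVmono : Monotone V) (hf : ∀ i, (V (i + 1)).map f ≤ V i) (i : ℕ) : (V i).map f ≤ V i := by
  cases i with
  | zero => simp [hV0]
  | succ i => exact (hf i).trans (hVmono i.le_succ)

end Module.End

section FlagLowering

variable {K A R : Type*} [CommRing K] [CommRing A] [Algebra K A] [CommRing R] [Algebra K R]

variable (R) in
def tmulSpan (P : Submodule K A) : Submodule K (A ⊗[K] R) :=
  Submodule.span K {x | ∃ a ∈ P, ∃ r : R, x = a ⊗ₜ[K] r}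

theorem tmul_mem_tmulSpan {P : Submodule K A} {a : A} (ha : a ∈ P) (r : R) :
    a ⊗ₜ[K] r ∈ tmulSpan R P :=
  Submodule.subset_span ⟨a, ha, r, rfl⟩

theorem tmulSpan_bot : tmulSpan R (⊥ : Submodule K A) = ⊥ := by
  rw [tmulSpan, Submodule.span_eq_bot]
  rintro x ⟨a, ha, r, rfl⟩
  rw [(Submodule.mem_bot K).1 ha, zero_tmul]

variable {m : ℕ} {δ : Fin m → Derivation K A A} {dR : Derivation K R R} {c : Fin m → K}
  {h : Fin m → R} {DT : Derivation K (A ⊗[K] R) (A ⊗[K] R)}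

theorem apply_tmul_sub_tmul_mem_tmulSpan
    (hDT : ∀ (g : A) (f : R),
      DT (g ⊗ₜ[K] f) = (∑ α, c α • ((δ α g) ⊗ₜ[K] (h α * f))) + g ⊗ₜ[K] (dR f))
    {Q : Submodule K A} {g : A} (hg : ∀ α, δ α g ∈ Q) (f : R) :
    DT (g ⊗ₜ[K] f) - g ⊗ₜ[K] dR f ∈ tmulSpan R Q := by
  rw [hDT, add_sub_cancel_right]
  exact Submodule.sum_mem _ fun α _ => Submodule.smul_mem _ _ (tmul_mem_tmulSpan (hg α) _)

theorem tmulSpan_le_comap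
    (hDT : ∀ (g : A) (f : R),
      DT (g ⊗ₜ[K] f) = (∑ α, c α • ((δ α g) ⊗ₜ[K] (h α * f))) + g ⊗ₜ[K] (dR f))
    {P : Submodule K A} (hP : ∀ α, ∀ a ∈ P, δ α a ∈ P) :
    tmulSpan R P ≤ (tmulSpan R P).comap DT.toLinearMap := by
  refine Submodule.span_le.2 ?_
  rintro _ ⟨a, ha, r, rfl⟩
  simpa using (tmulSpan R P).add_mem
    (apply_tmul_sub_tmul_mem_tmulSpan hDT (fun α => hP α a ha) r) (tmul_mem_tmulSpan ha (dR r))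

theorem pow_apply_tmul_mem_tmulSpan
    (hDT : ∀ (g : A) (f : R),
      DT (g ⊗ₜ[K] f) = (∑ α, c α • ((δ α g) ⊗ₜ[K] (h α * f))) + g ⊗ₜ[K] (dR f))
    {Q : Submodule K A} (hQ : ∀ α, ∀ a ∈ Q, δ α a ∈ Q) {g : A} (hg : ∀ α, δ α g ∈ Q) {f : R}
    {n : ℕ} (hn : (dR.toLinearMap ^ n) f = 0) :
    (DT.toLinearMap ^ n) (g ⊗ₜ[K] f) ∈ tmulSpan R Q := by
  simpa [hn] using Module.End.pow_apply_sub_mem_of_apply_sub_mem (tmulSpan_le_comap hDT hQ)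
    (L := TensorProduct.mk K A R g) (apply_tmul_sub_tmul_mem_tmulSpan hDT hg) n f

end FlagLowering

open Module.End in
theorem flag_lowering_derivation_locally_nilpotent_general
    {K : Type*} [Field K]
    {A R : Type*} [CommRing A] [Algebra K A] [CommRing R] [Algebra K R]
    {m s : ℕ} (δ : Fin m → Derivation K A A) (V : ℕ → Submodule K A)
    (hV0 : V 0 = ⊥) (hVmono : Monotone V)
    (hlow : ∀ (α : Fin m) (i : ℕ), Submodule.map (δ α).toLinearMap (V (i + 1)) ≤ V i)
    (dR : Derivation K R R)
    (hdR : ∀ f : R, ∃ n : ℕ, (dR.toLinearMap ^ n) f = 0)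
    (c : Fin m → K) (h : Fin m → R)
    (DT : Derivation K (A ⊗[K] R) (A ⊗[K] R))
    (hDT : ∀ (g : A) (f : R),
      DT (g ⊗ₜ[K] f) = (∑ α, c α • ((δ α g) ⊗ₜ[K] (h α * f))) + g ⊗ₜ[K] (dR f)) :
    (∀ (i : ℕ) (g : A), g ∈ V (i + 1) → ∀ f : R, ∃ k : ℕ, 0 < k ∧
      (DT.toLinearMap ^ k) (g ⊗ₜ[K] f) ∈
        Submodule.span K {x : A ⊗[K] R | ∃ a ∈ V i, ∃ r : R, x = a ⊗ₜ[K] r}) ∧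
    (∀ (g : A), g ∈ V s → ∀ f : R, ∃ n : ℕ, (DT.toLinearMap ^ n) (g ⊗ₜ[K] f) = 0) := by
  have hstable : ∀ α i, ∀ a ∈ V i, δ α a ∈ V i := fun α i a ha =>
    map_le_self_of_map_succ_le hV0 hVmono (hlow α) i ⟨a, ha, rfl⟩
  have hlowers : ∀ (i : ℕ) (g : A), g ∈ V (i + 1) → ∀ f : R, ∃ k : ℕ, 0 < k ∧
      (DT.toLinearMap ^ k) (g ⊗ₜ[K] f) ∈ tmulSpan R (V i) := fun i g hg f => by
    obtain ⟨n, hn⟩ := hdR f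
    refine ⟨n + 1, n.succ_pos,
      pow_apply_tmul_mem_tmulSpan hDT (hstable · i) (fun α => hlow α i ⟨g, hg, rfl⟩) ?_⟩
    rw [pow_succ', mul_apply, hn, map_zero]
  refine ⟨hlowers, fun g hg f => ?_⟩
  have hnil := le_maxGenEigenspace_zero_of_pow_apply_mem (E := DT.toLinearMap)
    (W := fun i => tmulSpan R (V i)) (by simp only [hV0, tmulSpan_bot]) (fun _ => rfl)
    (by rintro i _ ⟨g, hg, f, rfl⟩; exact (hlowers i g hg f).imp fun _ => And.right) s
  exact (mem_maxGenEigenspace_zero_iff _ _).1 (hnil (tmul_mem_tmulSpan hg f))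

/-- Let `A`, `R` be commutative algebras over a field `K` of characteristic
zero, let `δ_α` be finitely many derivations of `A` and let `V : ℕ → Submodule K A` be a
flag `0 = V₀ ⊆ V₁ ⊆ … ⊆ V_s` with `δ_α (V_i) ⊆ V_{i-1}` (the infinitesimal action of a
nilpotent Lie algebra lowering the flag). Let `∂_R` be a locally nilpotent derivation of
`R`, and let `D` be a derivation of `A ⊗ R` with
`∂(g ⊗ f) = Σ_α c_α (δ_α g) ⊗ (h_α f) + g ⊗ ∂_R f`.
Then for every `i`, `g ∈ V_{i+1}` and `f ∈ R` some power of `D` sends `g ⊗ f` into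
`V_i ⊗ R`; in particular `D` is locally nilpotent on `V_s ⊗ R`. -/
theorem flag_lowering_derivation_locally_nilpotent
    {K : Type*} [Field K] [CharZero K]
    {A R : Type*} [CommRing A] [Algebra K A] [CommRing R] [Algebra K R]
    {m s : ℕ} (δ : Fin m → Derivation K A A) (V : ℕ → Submodule K A)
    (hV0 : V 0 = ⊥) (hVmono : Monotone V)
    (hVfin : ∀ i, FiniteDimensional K (V i))
    (hlow : ∀ (α : Fin m) (i : ℕ), Submodule.map (δ α).toLinearMap (V (i + 1)) ≤ V i)
    (dR : Derivation K R R)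
    (hdR : ∀ f : R, ∃ n : ℕ, (dR.toLinearMap ^ n) f = 0)
    (c : Fin m → K) (h : Fin m → R)
    (DT : Derivation K (A ⊗[K] R) (A ⊗[K] R))
    (hDT : ∀ (g : A) (f : R),
      DT (g ⊗ₜ[K] f) = (∑ α, c α • ((δ α g) ⊗ₜ[K] (h α * f))) + g ⊗ₜ[K] (dR f)) :
    (∀ (i : ℕ) (g : A), g ∈ V (i + 1) → ∀ f : R, ∃ k : ℕ, 0 < k ∧
      (DT.toLinearMap ^ k) (g ⊗ₜ[K] f) ∈
        Submodule.span K {x : A ⊗[K] R | ∃ a ∈ V i, ∃ r : R, x = a ⊗ₜ[K] r}) ∧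
    (∀ (g : A), g ∈ V s → ∀ f : R, ∃ n : ℕ, (DT.toLinearMap ^ n) (g ⊗ₜ[K] f) = 0) :=
  flag_lowering_derivation_locally_nilpotent_general δ V hV0 hVmono hlow dR hdR c h DT hDT
end

section
/- Let R be a commutative domain over a field K, G an abelian group, and suppose R is G-graded with each graded piece of dimension at most 1 over K. Fix μ ∈ G. Then the set of derivations D of R that are homogeneous of degree μ (D(R_λ) ⊂ R_{λ+μ} for all λ ∈ G) forms a K-vector space, and if R is generated as a K-algebra by finitely many homogeneous elements, this space is finite-dimensional. -/
/-! A derivation is determined by its values on a set of algebra generators. For a homogeneous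
derivation of degree `μ`, the value on a homogeneous generator of degree `λ` lies in the graded
piece of degree `λ + μ`, which has dimension at most one; so evaluation on finitely many
homogeneous generators embeds the homogeneous derivations of degree `μ` into a finite-dimensional
space. -/

namespace Derivation

variable {K R : Type*}

def homogeneousOfDegree [CommSemiring K] [CommSemiring R] [Algebra K R] {G : Type*} [Add G]
    (𝒜 : G → Submodule K R) (μ : G) : Submodule K (Derivation K R R) where
  carrier := {D | ∀ g, ∀ x ∈ 𝒜 g, D x ∈ 𝒜 (g + μ)}
  add_mem' h₁ h₂ g x hx := add_mem (h₁ g x hx) (h₂ g x hx)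
  zero_mem' _ _ _ := zero_mem _
  smul_mem' c _ hD g x hx := Submodule.smul_mem _ c (hD g x hx)

theorem finiteDimensional_of_apply_generators_mem [Field K] [CommRing R] [Algebra K R]
    {ι : Type*} [Finite ι] {x : ι → R} (hx : Algebra.adjoin K (Set.range x) = ⊤)
    (V : ι → Submodule K R) [∀ i, FiniteDimensional K (V i)]
    (W : Submodule K (Derivation K R R)) (hW : ∀ D ∈ W, ∀ i, D (x i) ∈ V i) :
    FiniteDimensional K W := by
  let eval : W →ₗ[K] ∀ i, V i :=
    { toFun D i := ⟨D.1 (x i), hW D D.2 i⟩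
      map_add' _ _ := rfl
      map_smul' _ _ := rfl }
  refine FiniteDimensional.of_injective eval fun D₁ D₂ h ↦
    Subtype.ext <| ext_of_adjoin_eq_top _ hx ?_
  rintro _ ⟨i, rfl⟩
  exact congrArg Subtype.val (congrFun h i)

end Derivation

open Derivation in
theorem homogeneous_derivations_form_finite_dimensional_space_general
    {K R G : Type*} [Field K] [CommRing R] [Algebra K R]
    [AddCommGroup G]
    (𝒜 : G → Submodule K R)
    (hdim : ∀ g : G, Module.rank K (𝒜 g) ≤ 1)
    (μ : G) :
    ∃ W : Submodule K (Derivation K R R),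
      (↑W : Set (Derivation K R R)) = {D | ∀ g : G, ∀ x ∈ 𝒜 g, D x ∈ 𝒜 (g + μ)} ∧
      ((∃ T : Finset R, (∀ x ∈ T, ∃ g : G, x ∈ 𝒜 g) ∧
          Algebra.adjoin K (↑T : Set R) = ⊤) →
        FiniteDimensional K W) := by
  refine ⟨homogeneousOfDegree 𝒜 μ, rfl, ?_⟩
  rintro ⟨T, hT, hgen⟩
  choose deg hdeg using fun x : T ↦ hT x x.2
  have (g : G) : FiniteDimensional K (𝒜 g) :=
    Module.rank_lt_aleph0_iff.mp ((hdim g).trans_lt Cardinal.one_lt_aleph0)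
  exact finiteDimensional_of_apply_generators_mem (x := ((↑) : T → R))
    (by rwa [Subtype.range_coe]) (fun t ↦ 𝒜 (deg t + μ)) _ fun D hD t ↦ hD _ _ (hdeg t)

/-- Let `R` be a commutative domain over a field `K` of characteristic
zero, graded by an abelian group `G` with each graded piece of dimension at most `1`.
For a fixed `μ ∈ G`, the derivations of `R` that are homogeneous of degree `μ` form a
`K`-subspace of the space of derivations, and this subspace is finite-dimensional as soon
as `R` is generated as a `K`-algebra by finitely many homogeneous elements. -/
theorem homogeneous_derivations_form_finite_dimensional_space
    {K R G : Type*} [Field K] [CharZero K] [CommRing R] [IsDomain R] [Algebra K R]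
    [AddCommGroup G] [DecidableEq G]
    (𝒜 : G → Submodule K R) [GradedAlgebra 𝒜]
    (hdim : ∀ g : G, Module.rank K (𝒜 g) ≤ 1)
    (μ : G) :
    ∃ W : Submodule K (Derivation K R R),
      (↑W : Set (Derivation K R R)) = {D | ∀ g : G, ∀ x ∈ 𝒜 g, D x ∈ 𝒜 (g + μ)} ∧
      ((∃ T : Finset R, (∀ x ∈ T, ∃ g : G, x ∈ 𝒜 g) ∧
          Algebra.adjoin K (↑T : Set R) = ⊤) →
        FiniteDimensional K W) :=
  homogeneous_derivations_form_finite_dimensional_space_general 𝒜 hdim μ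
end
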